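/- Let 𝓗 be a complex Hilbert space and ξ ∈ 𝓗 a unit vector. Let H₀, A₁, A₂, B₁, B₂, P, X, Y, Z be continuous linear operators on 𝓗 such that: A₁, A₂, B₁, B₂, P, X, Y, Z are all self-adjoint and square to the identity; A₁ξ = ξ, A₂ξ = ξ, B₁ξ = ξ, B₂ξ = ξ; X·Y = −Y·X = i·Z, Y·Z = −Z·Y = i·X, Z·X = −X·Z = i·Y; H₀ commutes with X, Y, Z; each Aᵢ commutes with X and anticommutes with Y and Z; each Bᵢ anticommutes with X and Y and commutes with Z; P commutes with X, Y, Z, A₁, A₂ and anticommutes with B₁, B₂. Set H = H₀ − A₁ − A₂ − B₁ − B₂, N = n_x·X + n_y·Y + n_z·Z for real n_x, n_y, n_z with n_x² + n_y² + n_z² = 1, M_k = (1/2)·(1 + k·P) and U_k = (cos θ)·1 + i·k·(sin θ)·N for k ∈ {−1, 1} and θ ∈ ℝ. Then Σ_{k ∈ {−1,1}} ⟪ξ, M_k·U_k★·H·U_k·M_k·ξ⟫ − Σ_{k ∈ {−1,1}} ⟪ξ, M_k·H·M_k·ξ⟫ = (sin θ)²·Σ_{k ∈ {−1,1}} ⟪ξ,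 M_k·N·(H·N − N·H)·M_k·ξ⟫, where U_k★ denotes the adjoint of U_k. -/

import Mathlib

/-!
Conjugating `H` by `U_k = cos θ + i k sin θ N` with `N² = 1` gives
`H + i k sin θ cos θ [H, N] + sin²θ N [H, N]`, and the `k`-weighted sum of the measurement
sandwiches `M_k T M_k` is `(P T + T P) / 2`. So the energy difference is the second-order term plus
`i sin θ cos θ / 2 · ⟪ξ, (P [H, N] + [H, N] P) ξ⟫`, and this first-order term vanishes: `H₀`
commutes with `N`, each `[B_i, N]` anticommutes with `P`, and `P [A_i, N] + [A_i, N] P` is the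
commutator `[A_i, P N + N P]`, whose expectation in `ξ` is zero since `A_i` is self-adjoint and
fixes `ξ`.
-/

section Algebra

variable {𝕜 R : Type*} [CommRing 𝕜] [Ring R] [Algebra 𝕜 R]

theorem smul_add_smul_add_smul_mul_self {X Y Z : R} (hX : X * X = 1) (hY : Y * Y = 1)
    (hZ : Z * Z = 1) (hXY : X * Y = -(Y * X)) (hYZ : Y * Z = -(Z * Y)) (hZX : Z * X = -(X * Z))
    (x y z : 𝕜) :
    (x • X + y • Y + z • Z) * (x • X + y • Y + z • Z) = (x ^ 2 + y ^ 2 + z ^ 2) • 1 := by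
  simp only [add_mul, mul_add, smul_mul_smul_comm, hX, hY, hZ, hXY, hYZ, hZX, smul_neg]
  module

theorem Commute.smul_add_smul_add_smul {P X Y Z : R} (hX : Commute P X) (hY : Commute P Y)
    (hZ : Commute P Z) (x y z : 𝕜) : Commute P (x • X + y • Y + z • Z) :=
  ((hX.smul_right x).add_right (hY.smul_right y)).add_right (hZ.smul_right z)

theorem smul_one_sub_smul_mul_mul_smul_one_add_smul {N : R} (hN : N * N = 1) {a c : 𝕜}
    (hac : c * c - a * a = 1) (H : R) :
    (c • 1 - a • N) * H * (c • 1 + a • N) = H + (a * c) • ⁅H, N⁆ - (a * a) • (N * ⁅H, N⁆) := by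
  have hNHN : N * H * N = N * ⁅H, N⁆ + H := by
    rw [Ring.lie_def, mul_sub, ← mul_assoc, ← mul_assoc, hN, one_mul, sub_add_cancel]
  calc (c • 1 - a • N) * H * (c • 1 + a • N)
      = (c * c - a * a) • H + (a * c) • (H * N - N * H) - (a * a) • (N * H * N - H) := by
        simp only [sub_mul, mul_add, smul_mul_assoc, mul_smul_comm, one_mul, mul_one, mul_assoc]
        module
    _ = H + (a * c) • ⁅H, N⁆ - (a * a) • (N * ⁅H, N⁆) := by
        rw [hac, one_smul, ← Ring.lie_def, hNHN, add_sub_cancel_right]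

theorem Commute.mul_lie_add_lie_mul {P A : R} (h : Commute P A) (N : R) :
    P * ⁅A, N⁆ + ⁅A, N⁆ * P = ⁅A, P * N + N * P⁆ := by
  have hPAN : P * A * N = A * P * N := by rw [h.eq]
  have hNAP : N * A * P = N * P * A := by rw [mul_assoc, ← h.eq, ← mul_assoc]
  simp only [Ring.lie_def, mul_sub, sub_mul, mul_add, add_mul, ← mul_assoc, hPAN, hNAP]
  abel

theorem mul_lie_add_lie_mul_eq_zero {P B N : R} (hPB : P * B = -(B * P)) (hPN : Commute P N) :
    P * ⁅B, N⁆ + ⁅B, N⁆ * P = 0 := by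
  have hPBN : P * B * N = -(B * N * P) := by
    rw [hPB, neg_mul, mul_assoc B P N, hPN.eq, ← mul_assoc]
  have hPNB : P * N * B = -(N * B * P) := by
    rw [hPN.eq, mul_assoc, hPB, mul_neg, ← mul_assoc]
  simp only [Ring.lie_def, mul_sub, sub_mul, ← mul_assoc, hPBN, hPNB]
  abel

end Algebra

theorem sum_neg_one_one_smul_half_mul_mul {𝕜 R : Type*} [Field 𝕜] [CharZero 𝕜] [DecidableEq 𝕜]
    [Ring R] [Algebra 𝕜 R] (P T : R) :
    ∑ k ∈ ({-1, 1} : Finset 𝕜), k • ((1 / 2 : 𝕜) • (1 + k • P) * T * ((1 / 2 : 𝕜) • (1 + k • P)))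
      = (1 / 2 : 𝕜) • (P * T + T * P) := by
  rw [Finset.sum_pair (by norm_num)]
  simp only [smul_mul_assoc, mul_smul_comm, add_mul, mul_add, one_mul, mul_one, smul_add]
  module

section Star

variable {R : Type*} [Ring R] [StarRing R] [Algebra ℂ R] [StarModule ℂ R]

theorem star_rotation_mul_mul {N : R} (hN : IsSelfAdjoint N) (hN2 : N * N = 1) (H : R) (θ : ℝ)
    {k : ℂ} (hk : k = -1 ∨ k = 1) :
    star ((Real.cos θ : ℂ) • 1 + (Complex.I * k * Real.sin θ) • N) * H
        * ((Real.cos θ : ℂ) • 1 + (Complex.I * k * Real.sin θ) • N)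
      = H + (Complex.I * k * Real.sin θ * Real.cos θ) • ⁅H, N⁆
        + ((Real.sin θ : ℂ) ^ 2) • (N * ⁅H, N⁆) := by
  have hcs : (Real.cos θ : ℂ) ^ 2 + (Real.sin θ : ℂ) ^ 2 = 1 := by
    exact_mod_cast Real.cos_sq_add_sin_sq θ
  set s : ℂ := (Real.sin θ : ℂ)
  set a : ℂ := Complex.I * k * s
  have hk2 : k * k = 1 := by rcases hk with rfl | rfl <;> norm_num
  have hstar : star a = -a := by
    rcases hk with rfl | rfl <;>
      simp only [a, s, star_mul', Complex.star_def, Complex.conj_I, Complex.conj_ofReal, map_neg,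
        map_one] <;> ring
  have hac : (Real.cos θ : ℂ) * Real.cos θ - a * a = 1 := by
    linear_combination hcs - k * k * s * s * Complex.I_mul_I + s * s * hk2
  have haa : -(a * a) = s ^ 2 := by
    linear_combination -(k * k * s * s) * Complex.I_mul_I + s * s * hk2
  rw [star_add, star_smul, star_smul, star_one, hN.star_eq, hstar, neg_smul, ← sub_eq_add_neg,
    Complex.star_def, Complex.conj_ofReal, smul_one_sub_smul_mul_mul_smul_one_add_smul hN2 hac,
    sub_eq_add_neg, ← neg_smul, haa]

end Star

theorem inner_lie_apply_eq_zero {𝕜 E : Type*} [RCLike 𝕜] [NormedAddCommGroup E]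
    [InnerProductSpace 𝕜 E] [CompleteSpace E] {A : E →L[𝕜] E} (hA : IsSelfAdjoint A) {ξ : E}
    (hAξ : A ξ = ξ) (S : E →L[𝕜] E) : inner 𝕜 ξ (⁅A, S⁆ ξ) = 0 := by
  have h : inner 𝕜 (A ξ) (S ξ) = inner 𝕜 ξ (A (S ξ)) := hA.isSymmetric ξ (S ξ)
  rw [hAξ] at h
  rw [Ring.lie_def, sub_apply, inner_sub_right, mul_apply_eq_comp, mul_apply_eq_comp, hAξ, h,
    sub_self]

theorem inner_mul_lie_add_lie_mul_apply_eq_zero {𝓗 : Type*} [NormedAddCommGroup 𝓗]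
    [InnerProductSpace ℂ 𝓗] [CompleteSpace 𝓗] {ξ : 𝓗} {H₀ A₁ A₂ B₁ B₂ P N : 𝓗 →L[ℂ] 𝓗}
    (hA₁ : IsSelfAdjoint A₁) (hA₂ : IsSelfAdjoint A₂) (hA₁ξ : A₁ ξ = ξ) (hA₂ξ : A₂ ξ = ξ)
    (hH₀N : Commute H₀ N) (hPN : Commute P N) (hPA₁ : Commute P A₁) (hPA₂ : Commute P A₂)
    (hPB₁ : P * B₁ = -(B₁ * P)) (hPB₂ : P * B₂ = -(B₂ * P)) :
    inner ℂ ξ ((P * ⁅H₀ - A₁ - A₂ - B₁ - B₂, N⁆ + ⁅H₀ - A₁ - A₂ - B₁ - B₂, N⁆ * P) ξ) = 0 := by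
  have hsplit : P * ⁅H₀ - A₁ - A₂ - B₁ - B₂, N⁆ + ⁅H₀ - A₁ - A₂ - B₁ - B₂, N⁆ * P
      = (P * ⁅H₀, N⁆ + ⁅H₀, N⁆ * P) - (P * ⁅A₁, N⁆ + ⁅A₁, N⁆ * P)
        - (P * ⁅A₂, N⁆ + ⁅A₂, N⁆ * P) - (P * ⁅B₁, N⁆ + ⁅B₁, N⁆ * P)
        - (P * ⁅B₂, N⁆ + ⁅B₂, N⁆ * P) := by
    simp only [Ring.lie_def]
    noncomm_ring
  rw [hsplit, commute_iff_lie_eq.mp hH₀N, hPA₁.mul_lie_add_lie_mul, hPA₂.mul_lie_add_lie_mul,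
    mul_lie_add_lie_mul_eq_zero hPB₁ hPN, mul_lie_add_lie_mul_eq_zero hPB₂ hPN]
  simp only [mul_zero, zero_mul, add_zero, zero_sub, sub_zero, sub_apply, neg_apply,
    inner_sub_right, inner_neg_right, inner_lie_apply_eq_zero hA₁ hA₁ξ,
    inner_lie_apply_eq_zero hA₂ hA₂ξ, neg_zero]

theorem sum_inner_conj_sub_sum_inner {𝓗 : Type*} [NormedAddCommGroup 𝓗]
    [InnerProductSpace ℂ 𝓗] [CompleteSpace 𝓗] (ξ : 𝓗) {N : 𝓗 →L[ℂ] 𝓗} (hN : IsSelfAdjoint N)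
    (hN2 : N * N = 1) (H P : 𝓗 →L[ℂ] 𝓗) (θ : ℝ)
    (hfirst : inner ℂ ξ ((P * ⁅H, N⁆ + ⁅H, N⁆ * P) ξ) = 0) :
    let M : ℂ → (𝓗 →L[ℂ] 𝓗) := fun k => (1 / 2 : ℂ) • (1 + k • P)
    let U : ℂ → (𝓗 →L[ℂ] 𝓗) := fun k =>
      (Real.cos θ : ℂ) • 1 + (Complex.I * k * Real.sin θ) • N
    (∑ k ∈ ({-1, 1} : Finset ℂ),
        inner ℂ ξ ((M k * ContinuousLinearMap.adjoint (U k) * H * U k * M k) ξ)) -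
      (∑ k ∈ ({-1, 1} : Finset ℂ), inner ℂ ξ ((M k * H * M k) ξ)) =
    (Real.sin θ : ℂ) ^ 2 *
      ∑ k ∈ ({-1, 1} : Finset ℂ), inner ℂ ξ ((M k * (N * ⁅H, N⁆) * M k) ξ) := by
  intro M U
  have hsum : ∑ k ∈ ({-1, 1} : Finset ℂ), k * inner ℂ ξ ((M k * ⁅H, N⁆ * M k) ξ) = 0 := by
    have h := congrArg (fun T => inner ℂ ξ (T ξ))
      (sum_neg_one_one_smul_half_mul_mul (𝕜 := ℂ) P ⁅H, N⁆)
    simpa only [sum_apply, inner_sum, smul_apply, inner_smul_right, hfirst, mul_zero] using h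
  have hk : ∀ k ∈ ({-1, 1} : Finset ℂ),
      inner ℂ ξ ((M k * ContinuousLinearMap.adjoint (U k) * H * U k * M k) ξ)
        = inner ℂ ξ ((M k * H * M k) ξ)
          + Complex.I * Real.sin θ * Real.cos θ * (k * inner ℂ ξ ((M k * ⁅H, N⁆ * M k) ξ))
          + (Real.sin θ : ℂ) ^ 2 * inner ℂ ξ ((M k * (N * ⁅H, N⁆) * M k) ξ) := by
    intro k hk
    have hU : star (U k) * H * U k
        = H + (Complex.I * k * Real.sin θ * Real.cos θ) • ⁅H, N⁆
          + ((Real.sin θ : ℂ) ^ 2) • (N * ⁅H, N⁆) :=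
      star_rotation_mul_mul hN hN2 H θ (by simpa using hk)
    rw [← ContinuousLinearMap.star_eq_adjoint, show M k * star (U k) * H * U k * M k
      = M k * (star (U k) * H * U k) * M k by simp only [mul_assoc], hU]
    simp only [mul_add, add_mul, smul_mul_assoc, mul_smul_comm, add_apply, smul_apply,
      inner_add_right, inner_smul_right]
    ring
  rw [Finset.sum_congr rfl hk, Finset.sum_add_distrib, Finset.sum_add_distrib, ← Finset.mul_sum,
    ← Finset.mul_sum, hsum]
  ring

theorem energy_difference_second_order_general {𝓗 : Type*} [NormedAddCommGroup 𝓗]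
    [InnerProductSpace ℂ 𝓗] [CompleteSpace 𝓗] (ξ : 𝓗)
    (H₀ A₁ A₂ B₁ B₂ P X Y Z : 𝓗 →L[ℂ] 𝓗)
    (hA₁sa : IsSelfAdjoint A₁) (hA₂sa : IsSelfAdjoint A₂)
    (hXsa : IsSelfAdjoint X)
    (hYsa : IsSelfAdjoint Y) (hZsa : IsSelfAdjoint Z)
    (hX2 : X * X = 1) (hY2 : Y * Y = 1) (hZ2 : Z * Z = 1)
    (hA₁ξ : A₁ ξ = ξ) (hA₂ξ : A₂ ξ = ξ)
    (hXY : X * Y = Complex.I • Z) (hYX : Y * X = -(Complex.I • Z))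
    (hYZ : Y * Z = Complex.I • X) (hZY : Z * Y = -(Complex.I • X))
    (hZX : Z * X = Complex.I • Y) (hXZ : X * Z = -(Complex.I • Y))
    (hH₀X : H₀ * X = X * H₀) (hH₀Y : H₀ * Y = Y * H₀) (hH₀Z : H₀ * Z = Z * H₀)
    (hPX : P * X = X * P) (hPY : P * Y = Y * P) (hPZ : P * Z = Z * P)
    (hPA₁ : P * A₁ = A₁ * P) (hPA₂ : P * A₂ = A₂ * P)
    (hPB₁ : P * B₁ = -(B₁ * P)) (hPB₂ : P * B₂ = -(B₂ * P))
    (n_x n_y n_z : ℝ) (hn : n_x ^ 2 + n_y ^ 2 + n_z ^ 2 = 1) (θ : ℝ) :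
    let H : 𝓗 →L[ℂ] 𝓗 := H₀ - A₁ - A₂ - B₁ - B₂
    let N : 𝓗 →L[ℂ] 𝓗 := (n_x : ℂ) • X + (n_y : ℂ) • Y + (n_z : ℂ) • Z
    let M : ℂ → (𝓗 →L[ℂ] 𝓗) := fun k => (1 / 2 : ℂ) • (1 + k • P)
    let U : ℂ → (𝓗 →L[ℂ] 𝓗) := fun k =>
      (Real.cos θ : ℂ) • 1 + (Complex.I * k * Real.sin θ) • N
    (∑ k ∈ ({-1, 1} : Finset ℂ),
        (inner ℂ ξ ((M k * ContinuousLinearMap.adjoint (U k) * H * U k * M k) ξ) : ℂ)) -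
      (∑ k ∈ ({-1, 1} : Finset ℂ), (inner ℂ ξ ((M k * H * M k) ξ) : ℂ)) =
    ((Real.sin θ : ℂ)) ^ 2 *
      ∑ k ∈ ({-1, 1} : Finset ℂ),
        (inner ℂ ξ ((M k * (N * (H * N - N * H)) * M k) ξ) : ℂ) := by
  intro H N M U
  rw [← Ring.lie_def]
  have hN : IsSelfAdjoint N :=
    ((IsSelfAdjoint.smul (Complex.conj_ofReal n_x) hXsa).add
      (IsSelfAdjoint.smul (Complex.conj_ofReal n_y) hYsa)).add
      (IsSelfAdjoint.smul (Complex.conj_ofReal n_z) hZsa)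
  have hN2 : N * N = 1 := by
    have hn' : (n_x : ℂ) ^ 2 + (n_y : ℂ) ^ 2 + (n_z : ℂ) ^ 2 = 1 := by exact_mod_cast hn
    rw [smul_add_smul_add_smul_mul_self hX2 hY2 hZ2 (by rw [hXY, hYX, neg_neg])
      (by rw [hYZ, hZY, neg_neg]) (by rw [hZX, hXZ, neg_neg]), hn', one_smul]
  exact sum_inner_conj_sub_sum_inner ξ hN hN2 H P θ
    (inner_mul_lie_add_lie_mul_apply_eq_zero hA₁sa hA₂sa hA₁ξ hA₂ξ
      (Commute.smul_add_smul_add_smul hH₀X hH₀Y hH₀Z _ _ _)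
      (Commute.smul_add_smul_add_smul hPX hPY hPZ _ _ _) hPA₁ hPA₂ hPB₁ hPB₂)

/-- Equation (9) of the paper: in the abstract toric code QET model, the energy
difference `E_B − E_A` reduces to the second-order term
`sin²θ · Σ_k ⟪ξ, M_k·N·[H, N]·M_k·ξ⟫`. -/
theorem energy_difference_second_order {𝓗 : Type*} [NormedAddCommGroup 𝓗]
    [InnerProductSpace ℂ 𝓗] [CompleteSpace 𝓗] (ξ : 𝓗) (hξ : ‖ξ‖ = 1)
    (H₀ A₁ A₂ B₁ B₂ P X Y Z : 𝓗 →L[ℂ] 𝓗)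
    (hA₁sa : IsSelfAdjoint A₁) (hA₂sa : IsSelfAdjoint A₂)
    (hB₁sa : IsSelfAdjoint B₁) (hB₂sa : IsSelfAdjoint B₂)
    (hPsa : IsSelfAdjoint P) (hXsa : IsSelfAdjoint X)
    (hYsa : IsSelfAdjoint Y) (hZsa : IsSelfAdjoint Z)
    (hA₁2 : A₁ * A₁ = 1) (hA₂2 : A₂ * A₂ = 1) (hB₁2 : B₁ * B₁ = 1) (hB₂2 : B₂ * B₂ = 1)
    (hP2 : P * P = 1) (hX2 : X * X = 1) (hY2 : Y * Y = 1) (hZ2 : Z * Z = 1)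
    (hA₁ξ : A₁ ξ = ξ) (hA₂ξ : A₂ ξ = ξ) (hB₁ξ : B₁ ξ = ξ) (hB₂ξ : B₂ ξ = ξ)
    (hXY : X * Y = Complex.I • Z) (hYX : Y * X = -(Complex.I • Z))
    (hYZ : Y * Z = Complex.I • X) (hZY : Z * Y = -(Complex.I • X))
    (hZX : Z * X = Complex.I • Y) (hXZ : X * Z = -(Complex.I • Y))
    (hH₀X : H₀ * X = X * H₀) (hH₀Y : H₀ * Y = Y * H₀) (hH₀Z : H₀ * Z = Z * H₀)
    (hA₁X : A₁ * X = X * A₁) (hA₁Y : A₁ * Y = -(Y * A₁)) (hA₁Z : A₁ * Z = -(Z * A₁))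
    (hA₂X : A₂ * X = X * A₂) (hA₂Y : A₂ * Y = -(Y * A₂)) (hA₂Z : A₂ * Z = -(Z * A₂))
    (hB₁X : B₁ * X = -(X * B₁)) (hB₁Y : B₁ * Y = -(Y * B₁)) (hB₁Z : B₁ * Z = Z * B₁)
    (hB₂X : B₂ * X = -(X * B₂)) (hB₂Y : B₂ * Y = -(Y * B₂)) (hB₂Z : B₂ * Z = Z * B₂)
    (hPX : P * X = X * P) (hPY : P * Y = Y * P) (hPZ : P * Z = Z * P)
    (hPA₁ : P * A₁ = A₁ * P) (hPA₂ : P * A₂ = A₂ * P)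
    (hPB₁ : P * B₁ = -(B₁ * P)) (hPB₂ : P * B₂ = -(B₂ * P))
    (n_x n_y n_z : ℝ) (hn : n_x ^ 2 + n_y ^ 2 + n_z ^ 2 = 1) (θ : ℝ) :
    let H : 𝓗 →L[ℂ] 𝓗 := H₀ - A₁ - A₂ - B₁ - B₂
    let N : 𝓗 →L[ℂ] 𝓗 := (n_x : ℂ) • X + (n_y : ℂ) • Y + (n_z : ℂ) • Z
    let M : ℂ → (𝓗 →L[ℂ] 𝓗) := fun k => (1 / 2 : ℂ) • (1 + k • P)
    let U : ℂ → (𝓗 →L[ℂ] 𝓗) := fun k =>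
      (Real.cos θ : ℂ) • 1 + (Complex.I * k * Real.sin θ) • N
    (∑ k ∈ ({-1, 1} : Finset ℂ),
        (inner ℂ ξ ((M k * ContinuousLinearMap.adjoint (U k) * H * U k * M k) ξ) : ℂ)) -
      (∑ k ∈ ({-1, 1} : Finset ℂ), (inner ℂ ξ ((M k * H * M k) ξ) : ℂ)) =
    ((Real.sin θ : ℂ)) ^ 2 *
      ∑ k ∈ ({-1, 1} : Finset ℂ),
        (inner ℂ ξ ((M k * (N * (H * N - N * H)) * M k) ξ) : ℂ) :=
  energy_difference_second_order_general ξ H₀ A₁ A₂ B₁ B₂ P X Y Z hA₁sa hA₂sa hXsa hYsa hZsa hX2 hY2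
    hZ2 hA₁ξ hA₂ξ hXY hYX hYZ hZY hZX hXZ hH₀X hH₀Y hH₀Z hPX hPY hPZ hPA₁ hPA₂ hPB₁ hPB₂ n_x n_y n_z
    hn θ
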